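/- arXiv:2507.10554 — 3 statements merged into one kernel-verified Lean document; each statement's English description precedes it below -/
import Mathlib

section
/- Let n ≥ 5 and δ ∈ ℂ. If [-,-] is a Lie bracket on μ₀ⁿ making (μ₀ⁿ, ·, [-,-]) a transposed δ-Poisson algebra, then (δ³ − 3δ² + 2δ) · (e₃ · [e₁, e₂]) = 0 in μ₀ⁿ. -/
open Finset

/-- The null-filiform associative multiplication on `ℂⁿ = Fin n → ℂ`.
The basis vector `e_i` (1-based) corresponds to the coordinate `i - 1`, and
`e_i · e_j = e_{i+j}` if `i + j ≤ n`, and `0` otherwise. -/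
noncomputable def nfMul (n : ℕ) (x y : Fin n → ℂ) : Fin n → ℂ :=
  fun k => ∑ i : Fin n, ∑ j : Fin n,
    if (i : ℕ) + (j : ℕ) + 1 = (k : ℕ) then x i * y j else 0

/-- The 1-based basis vector `e i` of `ℂⁿ` (zero if `i` is out of range `1,…,n`). -/
noncomputable def nfE (n : ℕ) (i : ℕ) : Fin n → ℂ :=
  fun k => if (k : ℕ) + 1 = i then 1 else 0

/-- The coefficient of the basis vector `e i` (1-based) in `x`. -/
noncomputable def nfCoeff (n : ℕ) (x : Fin n → ℂ) (i : ℕ) : ℂ :=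
  ∑ k : Fin n, if (k : ℕ) + 1 = i then x k else 0

/-- A Lie bracket (bilinear, alternating, satisfying the Jacobi identity)
on a complex vector space. -/
structure LieBracketOn (L : Type*) [AddCommGroup L] [Module ℂ L] where
  br : L → L → L
  add_left : ∀ x y z, br (x + y) z = br x z + br y z
  smul_left : ∀ (c : ℂ) (x y : L), br (c • x) y = c • br x y
  add_right : ∀ x y z, br x (y + z) = br x y + br x z
  smul_right : ∀ (c : ℂ) (x y : L), br x (c • y) = c • br x y
  alt : ∀ x, br x x = 0
  jacobi : ∀ x y z, br (br x y) z + br (br y z) x + br (br z x) y = 0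

/-- `(μ₀ⁿ, ·, [-,-])` is a transposed `δ`-Poisson algebra:
`δ • (z · [x,y]) = [z·x, y] + [x, z·y]`. -/
noncomputable def IsTransposedPoisson (n : ℕ) (δ : ℂ) (B : LieBracketOn (Fin n → ℂ)) : Prop :=
  ∀ x y z, δ • nfMul n z (B.br x y) = B.br (nfMul n z x) y + B.br x (nfMul n z y)

/-- `(μ₀ⁿ, ·, [-,-])` is a `δ`-Poisson algebra:
`[x, y·z] = δ • ([x,y]·z + y·[x,z])`. -/
noncomputable def IsDeltaPoisson (n : ℕ) (δ : ℂ) (B : LieBracketOn (Fin n → ℂ)) : Prop :=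
  ∀ x y z, B.br x (nfMul n y z) = δ • (nfMul n (B.br x y) z + nfMul n y (B.br x z))

/-- The bracket of the transposed 0-Poisson algebra `TP₀(α₁,…,αₙ)` on `μ₀ⁿ`:
determined by `[e₁,e₂] = ∑_{t=1}^n αₜ eₜ` and `[eᵢ,eⱼ] = 0` for all other
pairs `i < j`. -/
noncomputable def brTP0 (n : ℕ) (α : ℕ → ℂ) (x y : Fin n → ℂ) : Fin n → ℂ :=
  (nfCoeff n x 1 * nfCoeff n y 2 - nfCoeff n x 2 * nfCoeff n y 1) •
    ∑ t ∈ Finset.Icc 1 n, α t • nfE n t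

/-- The bracket of the transposed 1-Poisson algebra `TP₁(α₂,…,αₙ)` on `μ₀ⁿ`:
determined by `[e₁,eᵢ] = ∑_{t=i}^n α_{t-i+2} eₜ` for `2 ≤ i ≤ n` and
`[eᵢ,eⱼ] = 0` for `2 ≤ i < j ≤ n`. -/
noncomputable def brTP1 (n : ℕ) (α : ℕ → ℂ) (x y : Fin n → ℂ) : Fin n → ℂ :=
  ∑ i ∈ Finset.Icc 2 n,
    (nfCoeff n x 1 * nfCoeff n y i - nfCoeff n x i * nfCoeff n y 1) •
      ∑ t ∈ Finset.Icc i n, α (t + 2 - i) • nfE n t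

/-- The bracket of the transposed `δ`-Poisson algebra `TP_δ(a, b, c)`
(`a = α_{n-2}`, `b = α_{n-1}`, `c = αₙ`) on `μ₀ⁿ`: determined by
`[e₁,e₂] = a e_{n-2} + b e_{n-1} + c eₙ`, `[e₁,e₃] = δ(a e_{n-1} + b eₙ)`,
`[e₂,e₃] = ((δ²-δ)/2) a eₙ`, `[e₁,e₄] = ((δ²+δ)/2) a eₙ`, and `[eᵢ,eⱼ] = 0`
for all other pairs `i < j`. -/
noncomputable def brTPd (n : ℕ) (δ a b c : ℂ) (x y : Fin n → ℂ) : Fin n → ℂ :=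
  (nfCoeff n x 1 * nfCoeff n y 2 - nfCoeff n x 2 * nfCoeff n y 1) •
      (a • nfE n (n-2) + b • nfE n (n-1) + c • nfE n n)
  + (nfCoeff n x 1 * nfCoeff n y 3 - nfCoeff n x 3 * nfCoeff n y 1) •
      (δ • (a • nfE n (n-1) + b • nfE n n))
  + (nfCoeff n x 2 * nfCoeff n y 3 - nfCoeff n x 3 * nfCoeff n y 2) •
      (((δ^2 - δ)/2 * a) • nfE n n)
  + (nfCoeff n x 1 * nfCoeff n y 4 - nfCoeff n x 4 * nfCoeff n y 1) •
      (((δ^2 + δ)/2 * a) • nfE n n)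

/-- Two bracket structures on `μ₀ⁿ` are isomorphic (as transposed δ-Poisson
algebras): there is a linear bijection preserving both `·` and `[-,-]`. -/
noncomputable def TPIso (n : ℕ) (B B' : (Fin n → ℂ) → (Fin n → ℂ) → (Fin n → ℂ)) : Prop :=
  ∃ φ : (Fin n → ℂ) ≃ₗ[ℂ] (Fin n → ℂ),
    (∀ x y, φ (nfMul n x y) = nfMul n (φ x) (φ y)) ∧
    ∀ x y, φ (B x y) = B' (φ x) (φ y)

/-!
Write `T = e₃·[e₁,e₂]` and apply the transposed Poisson identity to basis triples. The triple
`(e₁,e₂; e₁)` gives `[e₁,e₃] = δ e₁·[e₁,e₂]`, hence `[e₁,e₅] = δ² T` from `(e₁,e₃; e₂)`, while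
`(e₂,e₃; e₁)` gives `[e₂,e₄] = δ e₁·[e₂,e₃]`. Multiplying the identities for `(e₁,e₃; e₁)` and
`(e₁,e₂; e₂)` by `e₁` yields `δ² T = e₁·[e₂,e₃] + e₁·[e₁,e₄]` and `δ T = -e₁·[e₂,e₃] + e₁·[e₁,e₄]`,
so `2 e₁·[e₂,e₃] = (δ² - δ) T`. The triple `(e₁,e₂; e₃)` now reads
`2 δ T = -δ (δ² - δ) T + 2 δ² T`, i.e. `(δ³ - 3δ² + 2δ) T = 0`.
-/

lemma nfMul_nfE_apply (n a : ℕ) (ha : 1 ≤ a) (w : Fin n → ℂ) (k : Fin n) :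
    nfMul n (nfE n a) w k =
      if a ≤ (k : ℕ) then w ⟨(k : ℕ) - a, lt_of_le_of_lt (Nat.sub_le _ _) k.2⟩ else 0 := by
  rcases lt_or_ge n a with hna | han
  · have hzero : nfE n a = 0 := funext fun i => if_neg (by omega)
    rw [hzero, if_neg (by omega)]
    simp [nfMul]
  unfold nfMul nfE
  rw [Finset.sum_eq_single_of_mem (⟨a - 1, by omega⟩ : Fin n) (Finset.mem_univ _)]
  · simp only [show a - 1 + 1 = a by omega, if_true, one_mul]
    split_ifs
    · rw [Finset.sum_eq_single_of_mem ⟨(k : ℕ) - a, _⟩ (Finset.mem_univ _)]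
      · exact if_pos (by simp only; omega)
      · intro j _ hj
        have hj' : (j : ℕ) ≠ (k : ℕ) - a := fun h => hj (Fin.ext h)
        exact if_neg (by omega)
    · exact Finset.sum_eq_zero fun j _ => if_neg (by omega)
  · intro i _ hi
    have hi' : (i : ℕ) ≠ a - 1 := fun h => hi (Fin.ext h)
    refine Finset.sum_eq_zero fun j _ => ?_
    rw [if_neg (by omega : ¬ (i : ℕ) + 1 = a), zero_mul, ite_self]

lemma nfE_mul_nfE (n a b : ℕ) (ha : 1 ≤ a) (hb : 1 ≤ b) :
    nfMul n (nfE n a) (nfE n b) = nfE n (a + b) := by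
  funext k
  rw [nfMul_nfE_apply n a ha]
  dsimp only [nfE]
  split_ifs <;> first | rfl | omega

lemma nfE_mul_nfE_mul (n a b : ℕ) (ha : 1 ≤ a := by norm_num) (hb : 1 ≤ b := by norm_num)
    (w : Fin n → ℂ) :
    nfMul n (nfE n a) (nfMul n (nfE n b) w) = nfMul n (nfE n (a + b)) w := by
  funext k
  rw [nfMul_nfE_apply n a ha, nfMul_nfE_apply n (a + b) (by omega)]
  split_ifs
  · rw [nfMul_nfE_apply n b hb, if_pos (by simp only; omega)]
    congr 1
    ext
    simp only
    omega
  · rw [nfMul_nfE_apply n b hb, if_neg (by simp only; omega)]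
  · omega
  · rfl

lemma nfMul_add_right (n : ℕ) (x y z : Fin n → ℂ) :
    nfMul n x (y + z) = nfMul n x y + nfMul n x z := by
  funext k
  simp only [nfMul, Pi.add_apply, ← Finset.sum_add_distrib]
  refine Finset.sum_congr rfl fun i _ => Finset.sum_congr rfl fun j _ => ?_
  split_ifs <;> ring

lemma nfMul_smul_right (n : ℕ) (c : ℂ) (x y : Fin n → ℂ) :
    nfMul n x (c • y) = c • nfMul n x y := by
  funext k
  simp only [nfMul, Pi.smul_apply, smul_eq_mul, Finset.mul_sum]
  refine Finset.sum_congr rfl fun i _ => Finset.sum_congr rfl fun j _ => ?_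
  split_ifs <;> ring

lemma nfMul_neg_right (n : ℕ) (x y : Fin n → ℂ) :
    nfMul n x (-y) = -nfMul n x y := by
  simpa using nfMul_smul_right n (-1) x y

lemma LieBracketOn.br_swap {L : Type*} [AddCommGroup L] [Module ℂ L]
    (B : LieBracketOn L) (x y : L) : B.br y x = -B.br x y := by
  have h := B.alt (x + y)
  rw [B.add_left, B.add_right, B.add_right, B.alt, B.alt, zero_add, add_zero] at h
  exact eq_neg_of_add_eq_zero_right h

lemma IsTransposedPoisson.on_nfE {n : ℕ} {δ : ℂ} {B : LieBracketOn (Fin n → ℂ)}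
    (hB : IsTransposedPoisson n δ B) (a b c : ℕ) (ha : 1 ≤ a := by norm_num)
    (hb : 1 ≤ b := by norm_num) (hc : 1 ≤ c := by norm_num) :
    δ • nfMul n (nfE n c) (B.br (nfE n a) (nfE n b)) =
      B.br (nfE n (c + a)) (nfE n b) + B.br (nfE n a) (nfE n (c + b)) := by
  rw [hB, nfE_mul_nfE n c a hc ha, nfE_mul_nfE n c b hc hb]

theorem stmt_1_general (n : ℕ) (δ : ℂ)
    (B : LieBracketOn (Fin n → ℂ)) (hB : IsTransposedPoisson n δ B) :
    (δ^3 - 3*δ^2 + 2*δ) • nfMul n (nfE n 3) (B.br (nfE n 1) (nfE n 2)) = 0 := by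
  have e₁₁ := nfE_mul_nfE_mul n 1 1
  have e₁₂ := nfE_mul_nfE_mul n 1 2
  have e₂₁ := nfE_mul_nfE_mul n 2 1
  simp only [Nat.reduceAdd] at e₁₁ e₁₂ e₂₁
  have br₁₃ : B.br (nfE n 1) (nfE n 3) = δ • nfMul n (nfE n 1) (B.br (nfE n 1) (nfE n 2)) := by
    simpa [B.alt] using (hB.on_nfE 1 2 1).symm
  have br₂₄ : B.br (nfE n 2) (nfE n 4) = δ • nfMul n (nfE n 1) (B.br (nfE n 2) (nfE n 3)) := by
    simpa [B.alt] using (hB.on_nfE 2 3 1).symm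
  have br₁₅ : B.br (nfE n 1) (nfE n 5) =
      δ • δ • nfMul n (nfE n 3) (B.br (nfE n 1) (nfE n 2)) := by
    simpa [B.alt, br₁₃, nfMul_smul_right, e₂₁] using (hB.on_nfE 1 3 2).symm
  have h₁₃₁ : δ • δ • nfMul n (nfE n 3) (B.br (nfE n 1) (nfE n 2)) =
      nfMul n (nfE n 1) (B.br (nfE n 2) (nfE n 3)) +
        nfMul n (nfE n 1) (B.br (nfE n 1) (nfE n 4)) := by
    simpa [br₁₃, nfMul_smul_right, nfMul_add_right, e₁₁, e₁₂] using
      congrArg (nfMul n (nfE n 1)) (hB.on_nfE 1 3 1)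
  have h₁₂₂ : δ • nfMul n (nfE n 3) (B.br (nfE n 1) (nfE n 2)) =
      -nfMul n (nfE n 1) (B.br (nfE n 2) (nfE n 3)) +
        nfMul n (nfE n 1) (B.br (nfE n 1) (nfE n 4)) := by
    simpa [B.br_swap (nfE n 2) (nfE n 3), nfMul_smul_right, nfMul_add_right, nfMul_neg_right,
      e₁₂] using congrArg (nfMul n (nfE n 1)) (hB.on_nfE 1 2 2)
  have h₁₂₃ : δ • nfMul n (nfE n 3) (B.br (nfE n 1) (nfE n 2)) =
      -B.br (nfE n 2) (nfE n 4) + B.br (nfE n 1) (nfE n 5) := by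
    simpa [B.br_swap (nfE n 2) (nfE n 4)] using hB.on_nfE 1 2 3
  linear_combination (norm := module)
    (2 : ℂ) • h₁₂₃ + (2 : ℂ) • br₁₅ - (2 : ℂ) • br₂₄ + δ • h₁₃₁ - δ • h₁₂₂

/-- for `n ≥ 5`, any transposed `δ`-Poisson structure on `μ₀ⁿ`
satisfies `(δ³ - 3δ² + 2δ) • (e₃ · [e₁,e₂]) = 0`. -/
theorem stmt_1 (n : ℕ) (hn : 5 ≤ n) (δ : ℂ)
    (B : LieBracketOn (Fin n → ℂ)) (hB : IsTransposedPoisson n δ B) :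
    (δ^3 - 3*δ^2 + 2*δ) • nfMul n (nfE n 3) (B.br (nfE n 1) (nfE n 2)) = 0 :=
  stmt_1_general n δ B hB
end

section
/- Let n ≥ 5 and δ ∈ ℂ with δ³ − 3δ² + 2δ ≠ 0. If [-,-] is a Lie bracket on μ₀ⁿ making (μ₀ⁿ, ·, [-,-]) a transposed δ-Poisson algebra, and α₁,…,αₙ ∈ ℂ are the coordinates of [e₁,e₂] in the basis e₁,…,eₙ (that is, [e₁,e₂] = Σ_{t=1}^n αₜ eₜ), then αₜ = 0 for 1 ≤ t ≤ n−3, and moreover [e₁,e₂] = α_{n−2} e_{n−2} + α_{n−1} e_{n−1} + αₙ eₙ, [e₁,e₃] = δ(α_{n−2} e_{n−1} + α_{n−1} eₙ), [e₁,e₄] = ((δ²+δ)/2) α_{n−2} eₙ, and [e₁,eᵢ] = 0 for all 5 ≤ i ≤ n. -/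
open Finset

lemma nfE_zero_of_gt (n i : ℕ) (h : n < i) : nfE n i = 0 := by
  funext k
  have := k.isLt
  simp only [nfE]
  rw [if_neg (by omega)]
  rfl

lemma nfMul_zero_right (n : ℕ) (x : Fin n → ℂ) : nfMul n x 0 = 0 := by
  funext k; simp [nfMul]

lemma nfMul_sum_right {ι : Type*} (n : ℕ) (x : Fin n → ℂ) (s : Finset ι)
    (f : ι → Fin n → ℂ) :
    nfMul n x (∑ i ∈ s, f i) = ∑ i ∈ s, nfMul n x (f i) := by
  classical
  induction s using Finset.induction with
  | empty => simp [nfMul_zero_right]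
  | insert a s h ih => rw [Finset.sum_insert h, Finset.sum_insert h, nfMul_add_right, ih]

lemma nfE_mul (n i j : ℕ) (hi : 1 ≤ i) (hj : 1 ≤ j) :
    nfMul n (nfE n i) (nfE n j) = nfE n (i + j) := by
  funext k
  have hk := k.isLt
  simp only [nfMul, nfE]
  by_cases hi' : i ≤ n
  · by_cases hj' : j ≤ n
    · rw [Finset.sum_eq_single (⟨i - 1, by omega⟩ : Fin n)]
      · rw [Finset.sum_eq_single (⟨j - 1, by omega⟩ : Fin n)]
        · simp only [if_pos (show i - 1 + 1 = i from by omega),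
            if_pos (show j - 1 + 1 = j from by omega), mul_one]
          exact if_congr (by omega) rfl rfl
        · intro b _ hb
          have : ¬((b : ℕ) + 1 = j) := by
            intro h; apply hb; apply Fin.ext; simp; omega
          rw [if_neg this, mul_zero, ite_self]
        · intro h; exact absurd (Finset.mem_univ _) h
      · intro a _ ha
        have : ¬((a : ℕ) + 1 = i) := by
          intro h; apply ha; apply Fin.ext; simp; omega
        rw [if_neg this]
        apply Finset.sum_eq_zero
        intro b _
        rw [zero_mul, ite_self]
      · intro h; exact absurd (Finset.mem_univ _) h
    · rw [if_neg (by omega)]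
      apply Finset.sum_eq_zero; intro a _
      apply Finset.sum_eq_zero; intro b _
      have := b.isLt
      rw [if_neg (show ¬((b:ℕ)+1 = j) by omega), mul_zero, ite_self]
  · rw [if_neg (by omega)]
    apply Finset.sum_eq_zero; intro a _
    apply Finset.sum_eq_zero; intro b _
    have := a.isLt
    rw [if_neg (show ¬((a:ℕ)+1 = i) by omega), zero_mul, ite_self]

noncomputable def Svec (n : ℕ) (α : ℕ → ℂ) (k : ℕ) : Fin n → ℂ :=
  ∑ t ∈ Finset.Icc 1 n, α t • nfE n (t + k)

lemma nfMul_E_Svec (n : ℕ) (α : ℕ → ℂ) (j k : ℕ) (hj : 1 ≤ j) :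
    nfMul n (nfE n j) (Svec n α k) = Svec n α (k + j) := by
  unfold Svec
  rw [nfMul_sum_right]
  refine Finset.sum_congr rfl fun t ht => ?_
  rw [nfMul_smul_right, nfE_mul n j (t+k) hj (by simp [Finset.mem_Icc] at ht; omega)]
  have h : j + (t + k) = t + (k + j) := by omega
  rw [h]

/-- for `n ≥ 5` and `δ³ - 3δ² + 2δ ≠ 0`, in any transposed
`δ`-Poisson structure on `μ₀ⁿ` with `[e₁,e₂] = ∑_{t=1}^n αₜ eₜ`, one has
`αₜ = 0` for `1 ≤ t ≤ n-3`, and the brackets `[e₁,eᵢ]` are as stated. -/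
theorem stmt_5 (n : ℕ) (hn : 5 ≤ n) (δ : ℂ) (hδ : δ^3 - 3*δ^2 + 2*δ ≠ 0)
    (B : LieBracketOn (Fin n → ℂ)) (hB : IsTransposedPoisson n δ B)
    (α : ℕ → ℂ)
    (hα : B.br (nfE n 1) (nfE n 2) = ∑ t ∈ Finset.Icc 1 n, α t • nfE n t) :
    (∀ t, 1 ≤ t → t ≤ n - 3 → α t = 0) ∧
    B.br (nfE n 1) (nfE n 2) =
      α (n-2) • nfE n (n-2) + α (n-1) • nfE n (n-1) + α n • nfE n n ∧
    B.br (nfE n 1) (nfE n 3) = δ • (α (n-2) • nfE n (n-1) + α (n-1) • nfE n n) ∧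
    B.br (nfE n 1) (nfE n 4) = ((δ^2 + δ)/2 * α (n-2)) • nfE n n ∧
    ∀ i, 5 ≤ i → i ≤ n → B.br (nfE n 1) (nfE n i) = 0 := by
  have skew : ∀ x y, B.br y x = - B.br x y := by
    intro x y
    have h := B.alt (x + y)
    rw [B.add_left, B.add_right, B.add_right, B.alt, B.alt, zero_add, add_zero] at h
    linear_combination (norm := module) h
  have h12 : B.br (nfE n 1) (nfE n 2) = Svec n α 0 := by
    rw [hα]; unfold Svec; simp
  -- [e1,e3]
  have h13 : B.br (nfE n 1) (nfE n 3) = δ • Svec n α 1 := by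
    have h := hB (nfE n 1) (nfE n 2) (nfE n 1)
    rw [h12, nfMul_E_Svec n α 1 0 le_rfl,
      nfE_mul n 1 1 le_rfl le_rfl, nfE_mul n 1 2 le_rfl (by norm_num)] at h
    simp only [Nat.reduceAdd, Nat.zero_add] at h
    rw [B.alt, zero_add] at h
    exact h.symm
  -- sum and difference relations for [e2,e3], [e1,e4]
  have hsum : B.br (nfE n 2) (nfE n 3) + B.br (nfE n 1) (nfE n 4) = δ • δ • Svec n α 2 := by
    have h := hB (nfE n 1) (nfE n 3) (nfE n 1)
    rw [h13, nfMul_smul_right, nfMul_E_Svec n α 1 1 le_rfl,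
      nfE_mul n 1 1 le_rfl le_rfl, nfE_mul n 1 3 le_rfl (by norm_num)] at h
    simp only [Nat.reduceAdd] at h
    exact h.symm
  have hdiff : δ • Svec n α 2 = - B.br (nfE n 2) (nfE n 3) + B.br (nfE n 1) (nfE n 4) := by
    have h := hB (nfE n 1) (nfE n 2) (nfE n 2)
    rw [h12, nfMul_E_Svec n α 2 0 (by norm_num),
      nfE_mul n 2 1 (by norm_num) le_rfl, nfE_mul n 2 2 (by norm_num) (by norm_num)] at h
    simp only [Nat.reduceAdd, Nat.zero_add] at h
    rw [skew (nfE n 2) (nfE n 3)] at h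
    exact h
  have h23 : B.br (nfE n 2) (nfE n 3) = ((δ^2 - δ)/2) • Svec n α 2 := by
    linear_combination (norm := module) ((1:ℂ)/2) • hsum + ((1:ℂ)/2) • hdiff
  have h14 : B.br (nfE n 1) (nfE n 4) = ((δ^2 + δ)/2) • Svec n α 2 := by
    linear_combination (norm := module) ((1:ℂ)/2) • hsum - ((1:ℂ)/2) • hdiff
  -- [e2,e4] two ways and [e1,e5]
  have h24a : B.br (nfE n 2) (nfE n 4) = δ • ((δ^2 - δ)/2) • Svec n α 3 := by
    have h := hB (nfE n 2) (nfE n 3) (nfE n 1)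
    rw [h23, nfMul_smul_right, nfMul_E_Svec n α 1 2 le_rfl,
      nfE_mul n 1 2 le_rfl (by norm_num), nfE_mul n 1 3 le_rfl (by norm_num)] at h
    simp only [Nat.reduceAdd] at h
    rw [B.alt, zero_add] at h
    exact h.symm
  have h15 : B.br (nfE n 1) (nfE n 5) = δ • δ • Svec n α 3 := by
    have h := hB (nfE n 1) (nfE n 3) (nfE n 2)
    rw [h13, nfMul_smul_right, nfMul_E_Svec n α 2 1 (by norm_num),
      nfE_mul n 2 1 (by norm_num) le_rfl, nfE_mul n 2 3 (by norm_num) (by norm_num)] at h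
    simp only [Nat.reduceAdd] at h
    rw [B.alt, zero_add] at h
    exact h.symm
  have h24b : δ • Svec n α 3 = - B.br (nfE n 2) (nfE n 4) + B.br (nfE n 1) (nfE n 5) := by
    have h := hB (nfE n 1) (nfE n 2) (nfE n 3)
    rw [h12, nfMul_E_Svec n α 3 0 (by norm_num),
      nfE_mul n 3 1 (by norm_num) le_rfl, nfE_mul n 3 2 (by norm_num) (by norm_num)] at h
    simp only [Nat.reduceAdd, Nat.zero_add] at h
    rw [skew (nfE n 2) (nfE n 4)] at h
    exact h
  have hS3 : Svec n α 3 = 0 := by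
    have hc : ((δ^3 - 3*δ^2 + 2*δ)/2) • Svec n α 3 = 0 := by
      rw [h24a, h15] at h24b
      linear_combination (norm := module) h24b
    rcases smul_eq_zero.mp hc with h | h
    · exfalso; apply hδ; field_simp at h; linear_combination h
    · exact h
  have part1 : ∀ t, 1 ≤ t → t ≤ n - 3 → α t = 0 := by
    intro t ht1 ht2
    have hk : t + 2 < n := by omega
    have h := congrFun hS3 ⟨t + 2, hk⟩
    simp only [Svec, Pi.zero_apply, Finset.sum_apply, Pi.smul_apply, smul_eq_mul, nfE] at h
    rw [Finset.sum_eq_single t] at h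
    · rw [if_pos (by simp), mul_one] at h
      exact h
    · intro b _ hbt
      rw [if_neg (by simp; omega), mul_zero]
    · intro hmem
      exact absurd (Finset.mem_Icc.mpr ⟨ht1, by omega⟩) hmem
  have key : ∀ k, Svec n α k =
      α (n-2) • nfE n (n-2+k) + α (n-1) • nfE n (n-1+k) + α n • nfE n (n+k) := by
    intro k
    have hsub : Finset.Icc (n-2) n ⊆ Finset.Icc 1 n :=
      Finset.Icc_subset_Icc (by omega) le_rfl
    have hf : ∀ x ∈ Finset.Icc 1 n, x ∉ Finset.Icc (n-2) n →
        α x • nfE n (x + k) = 0 := by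
      intro x hx hx'
      simp only [Finset.mem_Icc] at hx hx'
      rw [part1 x hx.1 (by omega), zero_smul]
    have hset : Finset.Icc (n-2) n = {n-2, n-1, n} := by
      ext a; simp only [Finset.mem_Icc, Finset.mem_insert, Finset.mem_singleton]; omega
    unfold Svec
    rw [← Finset.sum_subset hsub hf, hset,
      Finset.sum_insert (by simp; omega), Finset.sum_insert (by simp; omega),
      Finset.sum_singleton]
    abel
  have hSz : ∀ k, 3 ≤ k → Svec n α k = 0 := by
    intro k hk
    rw [key k, nfE_zero_of_gt n _ (by omega), nfE_zero_of_gt n _ (by omega),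
      nfE_zero_of_gt n _ (by omega)]
    simp
  have h1i : ∀ i, 5 ≤ i → B.br (nfE n 1) (nfE n i) = 0 := by
    intro i hi
    induction i, hi using Nat.le_induction with
    | base =>
      rw [h15, hS3]; simp
    | succ i hi ih =>
      have hA := hB (nfE n 1) (nfE n 2) (nfE n (i-1))
      rw [h12, nfMul_E_Svec n α (i-1) 0 (by omega),
        nfE_mul n (i-1) 1 (by omega) le_rfl, nfE_mul n (i-1) 2 (by omega) (by norm_num)] at hA
      rw [show i-1+1 = i by omega, show i-1+2 = i+1 by omega, show 0+(i-1) = i-1 by omega] at hA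
      rw [hSz (i-1) (by omega), smul_zero, skew (nfE n 2) (nfE n i)] at hA
      -- hA : 0 = -br e2 ei + br e1 e(i+1)
      have hBr := hB (nfE n 1) (nfE n i) (nfE n 1)
      rw [ih, nfMul_zero_right, smul_zero,
        nfE_mul n 1 1 le_rfl le_rfl, nfE_mul n 1 i le_rfl (by omega)] at hBr
      rw [show 1+i = i+1 by omega] at hBr
      simp only [Nat.reduceAdd] at hBr
      -- hBr : 0 = br e2 ei + br e1 e(i+1)
      have h2 : (2:ℂ) • B.br (nfE n 1) (nfE n (i+1)) = 0 := by
        linear_combination (norm := module) (-1:ℂ) • hA - hBr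
      rcases smul_eq_zero.mp h2 with h | h
      · norm_num at h
      · exact h
  refine ⟨part1, ?_, ?_, ?_, fun i h5 _ => h1i i h5⟩
  · rw [h12, key 0]; simp
  · rw [h13, key 1, show n-2+1 = n-1 by omega, show n-1+1 = n by omega,
      nfE_zero_of_gt n (n+1) (by omega), smul_zero, add_zero]
  · rw [h14, key 2, show n-2+2 = n by omega, show n-1+2 = n+1 by omega,
      nfE_zero_of_gt n (n+1) (by omega), nfE_zero_of_gt n (n+2) (by omega),
      smul_zero, smul_zero, add_zero, add_zero, smul_smul]
end

section
/- Let n ≥ 5 and α₃,…,αₙ ∈ ℂ with α₃ ≠ 0. Then the transposed 0-Poisson algebra TP₀(0,0,α₃,…,αₙ) is isomorphic to TP₀(0,0,α₃,0,…,0), i.e., to the structure on μ₀ⁿ with [e₁,e₂] = α₃ e₃ and all other basis brackets zero. -/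
open Finset

/-!
Identify `μ₀ⁿ` with the maximal ideal of `ℂ[X]/(X^(n+1))`, `eᵢ ↦ Xⁱ`. For `p = e₁ + (higher terms)`
the substitution `X ↦ p` is an automorphism `φ` of this algebra. It acts on the coefficients of
`e₁` and `e₂` by a unitriangular matrix, so it preserves `x₁y₂ - x₂y₁` and carries `TP₀` with
`[e₁,e₂] = A` to `TP₀` with `[e₁,e₂] = φ(A)`. Since `φ(e₃) = p³`, it remains to find `p` with
`α₃ p³ = ∑ αₜ eₜ = α₃ (e₃ + …)`, i.e. a cube root of `e₃ + (higher terms)`. It is built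
coefficient by coefficient: adding `c eⱼ` (`j ≥ 2`) to `p` leaves `p³` unchanged below `e_{j+2}`
and adds `3c` to its `e_{j+2}`-coefficient.
-/

open Polynomial

section

variable {n : ℕ}

/-- `X ^ m ∣ nfPoly x` says that `x` has no component along `eᵢ` for `i < m`. -/
noncomputable def nfPoly : (Fin n → ℂ) →ₗ[ℂ] ℂ[X] :=
  ∑ k : Fin n, (monomial ((k : ℕ) + 1)).comp (LinearMap.proj k)

lemma nfPoly_apply (x : Fin n → ℂ) : nfPoly x = ∑ k : Fin n, monomial ((k : ℕ) + 1) (x k) := by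
  simp [nfPoly]

lemma coeff_nfPoly (x : Fin n → ℂ) (i : ℕ) : (nfPoly x).coeff i = nfCoeff n x i := by
  simp [nfPoly_apply, coeff_monomial, nfCoeff]

lemma nfCoeff_succ (x : Fin n → ℂ) (k : Fin n) : nfCoeff n x (k + 1) = x k := by
  simp [nfCoeff, Fin.val_inj]

lemma nfCoeff_zero (x : Fin n → ℂ) : nfCoeff n x 0 = 0 := by
  simp [nfCoeff]

lemma nfCoeff_of_lt {i : ℕ} (hi : n < i) (x : Fin n → ℂ) : nfCoeff n x i = 0 :=
  Finset.sum_eq_zero fun k _ => if_neg (by omega)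

lemma nfCoeff_add (x y : Fin n → ℂ) (i : ℕ) :
    nfCoeff n (x + y) i = nfCoeff n x i + nfCoeff n y i := by
  simp [← coeff_nfPoly]

lemma nfCoeff_sub (x y : Fin n → ℂ) (i : ℕ) :
    nfCoeff n (x - y) i = nfCoeff n x i - nfCoeff n y i := by
  simp [← coeff_nfPoly]

lemma nfCoeff_smul (c : ℂ) (x : Fin n → ℂ) (i : ℕ) : nfCoeff n (c • x) i = c * nfCoeff n x i := by
  simp [← coeff_nfPoly]

lemma X_dvd_nfPoly (x : Fin n → ℂ) : X ∣ nfPoly x := by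
  rw [X_dvd_iff, coeff_nfPoly, nfCoeff_zero]

lemma eq_zero_of_X_pow_dvd_nfPoly {x : Fin n → ℂ} (h : X ^ (n + 1) ∣ nfPoly x) : x = 0 := by
  ext k
  rw [← nfCoeff_succ x k, ← coeff_nfPoly]
  exact X_pow_dvd_iff.mp h _ (by omega)

lemma X_pow_succ_dvd_nfPoly {x : Fin n → ℂ} {m : ℕ} (h : X ^ m ∣ nfPoly x)
    (hm : nfCoeff n x m = 0) : X ^ (m + 1) ∣ nfPoly x := by
  rw [X_pow_dvd_iff] at h ⊢
  intro d hd
  rcases Nat.lt_succ_iff_lt_or_eq.mp hd with hd | rfl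
  · exact h d hd
  · rwa [coeff_nfPoly]

lemma nfPoly_nfE {t : ℕ} (ht : t < n) : nfPoly (nfE n (t + 1)) = X ^ (t + 1) := by
  rw [nfPoly_apply, Finset.sum_eq_single ⟨t, ht⟩]
  · simp [nfE, monomial_one_right_eq_X_pow]
  · intro k _ hk
    rw [nfE, if_neg (fun h => hk (Fin.ext (by simpa using h))), map_zero]
  · simp

lemma nfCoeff_nfE {t : ℕ} (ht : t < n) (i : ℕ) :
    nfCoeff n (nfE n (t + 1)) i = if i = t + 1 then 1 else 0 := by
  rw [← coeff_nfPoly, nfPoly_nfE ht, coeff_X_pow]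

lemma nfCoeff_sum_smul_nfE (α : ℕ → ℂ) {i : ℕ} (hi : 1 ≤ i) (hin : i ≤ n) :
    nfCoeff n (∑ t ∈ Icc 1 n, α t • nfE n t) i = α i := by
  obtain ⟨j, rfl⟩ : ∃ j, i = j + 1 := ⟨i - 1, by omega⟩
  rw [nfCoeff_succ _ ⟨j, by omega⟩]
  simp [nfE, Finset.sum_apply, hin]

lemma nfMul_apply_eq_coeff (x y : Fin n → ℂ) (k : Fin n) :
    nfMul n x y k = (nfPoly x * nfPoly y).coeff (k + 1) := by
  simp only [nfMul, nfPoly_apply, Finset.sum_mul_sum, monomial_mul_monomial, finsetSum_coeff,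
    coeff_monomial]
  refine Finset.sum_congr rfl fun i _ => Finset.sum_congr rfl fun j _ => ?_
  exact if_congr (by omega) rfl rfl

lemma nfCoeff_nfMul {m : ℕ} (hm : m ≤ n) (x y : Fin n → ℂ) :
    nfCoeff n (nfMul n x y) m = (nfPoly x * nfPoly y).coeff m := by
  rcases m with _ | k
  · rw [nfCoeff_zero, mul_coeff_zero, coeff_nfPoly, nfCoeff_zero, zero_mul]
  · rw [nfCoeff_succ _ ⟨k, hm⟩, nfMul_apply_eq_coeff]

lemma X_pow_dvd_nfPoly_mul_sub (x y : Fin n → ℂ) :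
    X ^ (n + 1) ∣ nfPoly x * nfPoly y - nfPoly (nfMul n x y) := by
  rw [X_pow_dvd_iff]
  intro d hd
  rw [coeff_sub, coeff_nfPoly, nfCoeff_nfMul (by omega), sub_self]

lemma aeval_nfPoly_nfMul {A : Type*} [CommRing A] [Algebra ℂ A] {r : A} (hr : r ^ (n + 1) = 0)
    (x y : Fin n → ℂ) :
    aeval r (nfPoly (nfMul n x y)) = aeval r (nfPoly x) * aeval r (nfPoly y) := by
  obtain ⟨g, hg⟩ := X_pow_dvd_nfPoly_mul_sub x y
  rw [← map_mul, sub_eq_iff_eq_add'.mp hg, map_add, map_mul, map_pow, aeval_X, hr, zero_mul,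
    add_zero]

lemma X_pow_dvd_nfPoly_nfMul {x y : Fin n → ℂ} {a b : ℕ} (hx : X ^ a ∣ nfPoly x)
    (hy : X ^ b ∣ nfPoly y) : X ^ (a + b) ∣ nfPoly (nfMul n x y) := by
  have hxy := X_pow_dvd_iff.mp (pow_add (X : ℂ[X]) a b ▸ mul_dvd_mul hx hy)
  rw [X_pow_dvd_iff]
  intro d hd
  rw [coeff_nfPoly]
  rcases le_or_gt d n with hdn | hdn
  · rw [nfCoeff_nfMul hdn, hxy d hd]
  · exact nfCoeff_of_lt hdn _

lemma nfCoeff_nfMul_add {x y : Fin n → ℂ} {a b : ℕ} (hx : X ^ a ∣ nfPoly x)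
    (hy : X ^ b ∣ nfPoly y) (hab : a + b ≤ n) :
    nfCoeff n (nfMul n x y) (a + b) = nfCoeff n x a * nfCoeff n y b := by
  obtain ⟨f, hf⟩ := hx
  obtain ⟨g, hg⟩ := hy
  rw [nfCoeff_nfMul hab, ← coeff_nfPoly, ← coeff_nfPoly, hf, hg,
    show X ^ a * f * (X ^ b * g) = X ^ (a + b) * (f * g) by ring]
  simp only [coeff_X_pow_mul', le_refl, Nat.sub_self, if_true, mul_coeff_zero]

noncomputable def nfEmbed : (Fin n → ℂ) →ₗ[ℂ] ℂ[X] ⧸ Ideal.span {(X : ℂ[X]) ^ (n + 1)} :=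
  (Ideal.Quotient.mkₐ ℂ _).toLinearMap ∘ₗ nfPoly

lemma nfEmbed_apply (x : Fin n → ℂ) : nfEmbed x = Ideal.Quotient.mk _ (nfPoly x) := rfl

lemma nfEmbed_injective : Function.Injective (nfEmbed (n := n)) := by
  rw [← LinearMap.ker_eq_bot, LinearMap.ker_eq_bot']
  intro x hx
  rw [nfEmbed_apply, Ideal.Quotient.eq_zero_iff_mem, Ideal.mem_span_singleton] at hx
  exact eq_zero_of_X_pow_dvd_nfPoly hx

lemma nfEmbed_nfMul (x y : Fin n → ℂ) : nfEmbed (nfMul n x y) = nfEmbed x * nfEmbed y := by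
  rw [nfEmbed_apply, nfEmbed_apply, nfEmbed_apply, ← map_mul, Ideal.Quotient.eq,
    Ideal.mem_span_singleton, ← dvd_neg, neg_sub]
  exact X_pow_dvd_nfPoly_mul_sub x y

lemma nfEmbed_pow_succ (x : Fin n → ℂ) : nfEmbed x ^ (n + 1) = 0 := by
  obtain ⟨g, hg⟩ := X_dvd_nfPoly x
  rw [nfEmbed_apply, ← map_pow, Ideal.Quotient.eq_zero_iff_mem, Ideal.mem_span_singleton, hg,
    mul_pow]
  exact dvd_mul_right _ _

/-- `nfPow p k` is the `(k+1)`-st power of `p`. -/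
noncomputable def nfPow (p : Fin n → ℂ) : ℕ → Fin n → ℂ
  | 0 => p
  | k + 1 => nfMul n p (nfPow p k)

lemma nfEmbed_nfPow (p : Fin n → ℂ) (k : ℕ) : nfEmbed (nfPow p k) = nfEmbed p ^ (k + 1) := by
  induction k with
  | zero => simp [nfPow]
  | succ k ih => rw [nfPow, nfEmbed_nfMul, ih, pow_succ' _ (k + 1)]

lemma X_pow_dvd_nfPoly_nfPow (p : Fin n → ℂ) (k : ℕ) : X ^ (k + 1) ∣ nfPoly (nfPow p k) := by
  induction k with
  | zero => simpa [nfPow] using X_dvd_nfPoly p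
  | succ k ih =>
    have h := X_pow_dvd_nfPoly_nfMul (pow_one (X : ℂ[X]) ▸ X_dvd_nfPoly p) ih
    rwa [add_comm 1] at h

lemma nfCoeff_nfPow (p : Fin n → ℂ) {k : ℕ} (hk : k + 1 ≤ n) :
    nfCoeff n (nfPow p k) (k + 1) = nfCoeff n p 1 ^ (k + 1) := by
  induction k with
  | zero => simp [nfPow]
  | succ k ih =>
    have h := nfCoeff_nfMul_add (pow_one (X : ℂ[X]) ▸ X_dvd_nfPoly p)
      (X_pow_dvd_nfPoly_nfPow p k) (by omega)
    rw [add_comm 1] at h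
    rw [nfPow, h, ih (by omega), pow_succ' _ (k + 1)]

noncomputable def nfSubst (p : Fin n → ℂ) : (Fin n → ℂ) →ₗ[ℂ] (Fin n → ℂ) :=
  ∑ k : Fin n, (LinearMap.proj k).smulRight (nfPow p k)

lemma nfSubst_apply (p x : Fin n → ℂ) : nfSubst p x = ∑ k : Fin n, x k • nfPow p k := by
  simp [nfSubst]

lemma nfSubst_nfE (p : Fin n → ℂ) {t : ℕ} (ht : t < n) : nfSubst p (nfE n (t + 1)) = nfPow p t := by
  rw [nfSubst_apply, Finset.sum_eq_single ⟨t, ht⟩]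
  · simp [nfE]
  · intro k _ hk
    rw [nfE, if_neg (fun h => hk (Fin.ext (by simpa using h))), zero_smul]
  · simp

lemma nfEmbed_nfSubst (p x : Fin n → ℂ) :
    nfEmbed (nfSubst p x) = aeval (nfEmbed p) (nfPoly x) := by
  rw [nfSubst_apply, nfPoly_apply, map_sum, map_sum]
  refine Finset.sum_congr rfl fun k _ => ?_
  rw [map_smul, nfEmbed_nfPow, aeval_monomial]
  exact Algebra.smul_def (x k) (nfEmbed p ^ ((k : ℕ) + 1))

lemma nfSubst_nfMul (p x y : Fin n → ℂ) :
    nfSubst p (nfMul n x y) = nfMul n (nfSubst p x) (nfSubst p y) := by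
  apply nfEmbed_injective
  rw [nfEmbed_nfMul, nfEmbed_nfSubst, nfEmbed_nfSubst, nfEmbed_nfSubst,
    aeval_nfPoly_nfMul (nfEmbed_pow_succ p)]

lemma nfCoeff_nfSubst_of_dvd (p : Fin n → ℂ) {x : Fin n → ℂ} {m : ℕ} (hx : X ^ m ∣ nfPoly x) :
    nfCoeff n (nfSubst p x) m = nfCoeff n x m * nfCoeff n p 1 ^ m := by
  rcases m with _ | j
  · rw [nfCoeff_zero, nfCoeff_zero, zero_mul]
  rcases le_or_gt n j with hj | hj
  · rw [nfCoeff_of_lt (by omega), nfCoeff_of_lt (by omega), zero_mul]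
  rw [← coeff_nfPoly, nfSubst_apply, map_sum, finsetSum_coeff, Finset.sum_eq_single ⟨j, hj⟩]
  · rw [map_smul, coeff_smul, coeff_nfPoly, nfCoeff_nfPow p hj,
      ← nfCoeff_succ x ⟨j, hj⟩, smul_eq_mul]
  · intro k _ hk
    rw [map_smul, coeff_smul, smul_eq_mul]
    rcases lt_or_gt_of_ne (fun h => hk (Fin.ext h) : (k : ℕ) ≠ j) with hkj | hkj
    · rw [← nfCoeff_succ x k, ← coeff_nfPoly, X_pow_dvd_iff.mp hx _ (by omega), zero_mul]
    · rw [X_pow_dvd_iff.mp (X_pow_dvd_nfPoly_nfPow p k) _ (by omega), mul_zero]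
  · simp

lemma nfCoeff_nfSubst_one (p x : Fin n → ℂ) :
    nfCoeff n (nfSubst p x) 1 = nfCoeff n x 1 * nfCoeff n p 1 := by
  rw [nfCoeff_nfSubst_of_dvd (m := 1) p (by rw [pow_one]; exact X_dvd_nfPoly x), pow_one]

lemma nfCoeff_nfSubst_two (p x : Fin n → ℂ) :
    nfCoeff n (nfSubst p x) 2
      = nfCoeff n x 1 * nfCoeff n p 2 + nfCoeff n x 2 * nfCoeff n p 1 ^ 2 := by
  rcases Nat.eq_zero_or_pos n with rfl | hn
  · simp [nfCoeff]
  set x' := x - nfCoeff n x 1 • nfE n (0 + 1)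
  have hx' : X ^ 2 ∣ nfPoly x' := by
    rw [X_pow_dvd_iff]
    intro d hd
    interval_cases d <;> simp [x', nfCoeff_nfE hn, coeff_nfPoly, nfCoeff_zero]
  have hx'2 : nfCoeff n x' 2 = nfCoeff n x 2 := by
    simp [x', nfCoeff_sub, nfCoeff_smul, nfCoeff_nfE hn]
  conv_lhs => rw [← add_sub_cancel (nfCoeff n x 1 • nfE n (0 + 1)) x]
  rw [map_add, map_smul, nfSubst_nfE p hn, nfCoeff_add, nfCoeff_smul,
    nfCoeff_nfSubst_of_dvd p hx', hx'2, nfPow]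

lemma nfSubst_injective {p : Fin n → ℂ} (hp : nfCoeff n p 1 ≠ 0) :
    Function.Injective (nfSubst p) := by
  rw [← LinearMap.ker_eq_bot, LinearMap.ker_eq_bot']
  intro x hx
  have hdvd : ∀ m, X ^ m ∣ nfPoly x := by
    intro m
    induction m with
    | zero => simp
    | succ m ih =>
      refine X_pow_succ_dvd_nfPoly ih ?_
      have h := nfCoeff_nfSubst_of_dvd p ih
      rw [hx, ← coeff_nfPoly, map_zero, coeff_zero, eq_comm, mul_eq_zero] at h
      exact h.resolve_right (pow_ne_zero _ hp)
  exact eq_zero_of_X_pow_dvd_nfPoly (hdvd _)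

lemma nfSubst_bijective {p : Fin n → ℂ} (hp : nfCoeff n p 1 ≠ 0) :
    Function.Bijective (nfSubst p) :=
  ⟨nfSubst_injective hp, LinearMap.injective_iff_surjective.mp (nfSubst_injective hp)⟩

lemma nfSubst_det (p x y : Fin n → ℂ) :
    nfCoeff n (nfSubst p x) 1 * nfCoeff n (nfSubst p y) 2
        - nfCoeff n (nfSubst p x) 2 * nfCoeff n (nfSubst p y) 1
      = nfCoeff n p 1 ^ 3 * (nfCoeff n x 1 * nfCoeff n y 2 - nfCoeff n x 2 * nfCoeff n y 1) := by
  rw [nfCoeff_nfSubst_one, nfCoeff_nfSubst_one, nfCoeff_nfSubst_two, nfCoeff_nfSubst_two]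
  ring

lemma nfSubst_brTP0 {α β : ℕ → ℂ} {p : Fin n → ℂ} (hp : nfCoeff n p 1 = 1)
    (h : nfSubst p (∑ t ∈ Icc 1 n, α t • nfE n t) = ∑ t ∈ Icc 1 n, β t • nfE n t)
    (x y : Fin n → ℂ) :
    nfSubst p (brTP0 n α x y) = brTP0 n β (nfSubst p x) (nfSubst p y) := by
  rw [brTP0, brTP0, map_smul, h, nfSubst_det, hp, one_pow, one_mul]

lemma tpIso_brTP0_of_nfSubst {α β : ℕ → ℂ} {p : Fin n → ℂ} (hp : nfCoeff n p 1 = 1)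
    (h : nfSubst p (∑ t ∈ Icc 1 n, α t • nfE n t) = ∑ t ∈ Icc 1 n, β t • nfE n t) :
    TPIso n (brTP0 n α) (brTP0 n β) :=
  ⟨LinearEquiv.ofBijective (nfSubst p) (nfSubst_bijective (by simp [hp])), nfSubst_nfMul p,
    nfSubst_brTP0 hp h⟩

lemma TPIso.symm {B B' : (Fin n → ℂ) → (Fin n → ℂ) → (Fin n → ℂ)} (h : TPIso n B B') :
    TPIso n B' B := by
  obtain ⟨φ, hmul, hbr⟩ := h
  refine ⟨φ.symm, fun x y => φ.injective ?_, fun x y => φ.injective ?_⟩ <;> simp [hmul, hbr]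

lemma exists_nfPow_two_add {p : Fin n → ℂ} (hp : nfCoeff n p 1 = 1) (hn : 2 ≤ n)
    {d : Fin n → ℂ} (hd : nfCoeff n d 1 = 0) :
    ∃ s, nfPow (p + d) 2 = nfPow p 2 + nfMul n d s ∧ X ^ 2 ∣ nfPoly s ∧ nfCoeff n s 2 = 3 := by
  set q := p + d
  have hq : nfCoeff n q 1 = 1 := by rw [nfCoeff_add, hp, hd, add_zero]
  have hsq (x y : Fin n → ℂ) : X ^ 2 ∣ nfPoly (nfMul n x y) ∧
      nfCoeff n (nfMul n x y) 2 = nfCoeff n x 1 * nfCoeff n y 1 := by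
    have hX (x : Fin n → ℂ) : X ^ 1 ∣ nfPoly x := by rw [pow_one]; exact X_dvd_nfPoly x
    have hdvd := X_pow_dvd_nfPoly_nfMul (hX x) (hX y)
    have hcoeff := nfCoeff_nfMul_add (hX x) (hX y) hn
    rw [one_add_one_eq_two] at hdvd hcoeff
    exact ⟨hdvd, hcoeff⟩
  refine ⟨nfMul n q q + nfMul n q p + nfMul n p p, ?_, ?_, ?_⟩
  · apply nfEmbed_injective
    simp only [q, map_add, nfEmbed_nfMul, nfEmbed_nfPow]
    ring
  · simp only [map_add]
    exact dvd_add (dvd_add (hsq q q).1 (hsq q p).1) (hsq p p).1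
  · rw [nfCoeff_add, nfCoeff_add, (hsq q q).2, (hsq q p).2, (hsq p p).2, hp, hq]
    norm_num

lemma exists_nfPow_two_sub_dvd_succ {u p : Fin n → ℂ} (hp : nfCoeff n p 1 = 1) {i : ℕ}
    (hi : 1 ≤ i) (h : X ^ (i + 3) ∣ nfPoly (nfPow p 2 - u)) :
    ∃ q : Fin n → ℂ, nfCoeff n q 1 = 1 ∧ X ^ (i + 4) ∣ nfPoly (nfPow q 2 - u) := by
  rcases lt_or_ge n (i + 3) with hin | hin
  · exact ⟨p, hp, X_pow_succ_dvd_nfPoly h (nfCoeff_of_lt hin _)⟩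
  set c := nfCoeff n (nfPow p 2 - u) (i + 3)
  set d := (-c / 3) • nfE n (i + 1)
  have hd : X ^ (i + 1) ∣ nfPoly d := by
    rw [map_smul, nfPoly_nfE (by omega)]
    exact dvd_smul_of_dvd _ dvd_rfl
  have hd1 : nfCoeff n d 1 = 0 := by
    rw [nfCoeff_smul, nfCoeff_nfE (by omega), if_neg (by omega), mul_zero]
  obtain ⟨s, hs, hs2, hs3⟩ := exists_nfPow_two_add hp (by omega) hd1
  have hsub : nfPow (p + d) 2 - u = (nfPow p 2 - u) + nfMul n d s := by rw [hs]; abel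
  refine ⟨p + d, by rw [nfCoeff_add, hp, hd1, add_zero], X_pow_succ_dvd_nfPoly ?_ ?_⟩
  · have hds : X ^ (i + 1 + 2) ∣ nfPoly (nfMul n d s) := X_pow_dvd_nfPoly_nfMul hd hs2
    rw [hsub, map_add]
    exact dvd_add h hds
  · rw [hsub, nfCoeff_add, nfCoeff_nfMul_add hd hs2 hin, hs3, nfCoeff_smul,
      nfCoeff_nfE (by omega), if_pos rfl]
    ring

theorem exists_nfPow_two_eq {u : Fin n → ℂ} (hu1 : nfCoeff n u 1 = 0) (hu2 : nfCoeff n u 2 = 0)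
    (hu3 : nfCoeff n u 3 = 1) : ∃ p : Fin n → ℂ, nfCoeff n p 1 = 1 ∧ nfPow p 2 = u := by
  have hn : 3 ≤ n := by
    by_contra h
    rw [nfCoeff_of_lt (by omega)] at hu3
    exact zero_ne_one hu3
  have approx (i : ℕ) :
      ∃ p : Fin n → ℂ, nfCoeff n p 1 = 1 ∧ X ^ (i + 4) ∣ nfPoly (nfPow p 2 - u) := by
    induction i with
    | zero =>
      have hp : nfCoeff n (nfE n (0 + 1)) 1 = 1 := by simp [nfCoeff_nfE (by omega : 0 < n)]
      refine ⟨nfE n (0 + 1), hp, X_pow_succ_dvd_nfPoly ?_ ?_⟩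
      · rw [map_sub]
        refine dvd_sub (X_pow_dvd_nfPoly_nfPow _ 2) (X_pow_dvd_iff.mpr fun d hd => ?_)
        interval_cases d <;> simp [coeff_nfPoly, nfCoeff_zero, hu1, hu2]
      · rw [nfCoeff_sub, nfCoeff_nfPow _ hn, hp, hu3]
        norm_num
    | succ i ih =>
      obtain ⟨p, hp, h⟩ := ih
      exact exists_nfPow_two_sub_dvd_succ hp (by omega) h
  obtain ⟨p, hp, h⟩ := approx n
  exact ⟨p, hp, sub_eq_zero.mp (eq_zero_of_X_pow_dvd_nfPoly ((pow_dvd_pow X (by omega)).trans h))⟩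

end

/-- for `n ≥ 5` and `α₃ ≠ 0`, `TP₀(0,0,α₃,…,αₙ)` is isomorphic to
`TP₀(0,0,α₃,0,…,0)`. -/
theorem stmt_9 (n : ℕ) (hn : 5 ≤ n) (α : ℕ → ℂ)
    (h1 : α 1 = 0) (h2 : α 2 = 0) (h3 : α 3 ≠ 0) :
    TPIso n (brTP0 n α) (brTP0 n fun t => if t = 3 then α 3 else 0) := by
  set B := ∑ t ∈ Icc 1 n, α t • nfE n t
  have hB (i : ℕ) (hi : 1 ≤ i) (hi3 : i ≤ 3) : nfCoeff n ((α 3)⁻¹ • B) i = (α 3)⁻¹ * α i := by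
    rw [nfCoeff_smul, nfCoeff_sum_smul_nfE α hi (by omega)]
  obtain ⟨p, hp, hpB⟩ := exists_nfPow_two_eq (u := (α 3)⁻¹ • B)
    (by rw [hB 1 le_rfl (by norm_num), h1, mul_zero])
    (by rw [hB 2 (by norm_num) (by norm_num), h2, mul_zero])
    (by rw [hB 3 (by norm_num) le_rfl, inv_mul_cancel₀ h3])
  refine (tpIso_brTP0_of_nfSubst hp ?_).symm
  calc nfSubst p (∑ t ∈ Icc 1 n, (if t = 3 then α 3 else 0) • nfE n t)
      = nfSubst p (α 3 • nfE n (2 + 1)) := by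
        rw [Finset.sum_eq_single_of_mem 3 (Finset.mem_Icc.mpr ⟨by norm_num, by omega⟩) (fun t _ ht => by simp [ht])]
        simp
    _ = B := by
        rw [map_smul, nfSubst_nfE p (by omega), hpB, smul_smul, mul_inv_cancel₀ h3, one_smul]
end
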